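/- A constant-free group-valued functor F on a pointed symmetric monoidal category is polynomial of degree ≤ n if and only if for all objects c₁,…,c_{n+1}, the natural map F(c₁⊙…⊙c_{n+1}) → ∏_{i=1}^{n+1} F(c₁⊙…⊙ĉ_i⊙…⊙c_{n+1}) is injective. -/

import Mathlib

/-!
Unwinding the recursion, `cr_{n+1}F(c₁, …, c_{n+1})` is the intersection of the kernels of the
maps `F(c₁ ⊙ ⋯ ⊙ c_{n+1}) → F(c₁ ⊙ ⋯ ĉᵢ ⋯ ⊙ c_{n+1})`. In the step from `(c₁ ⊙ c₂, c₃, …)` to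
`(c₁, c₂, c₃, …)` the two projections of `c₁ ⊙ c₂` contribute the kernels of omitting `c₂` and
`c₁`; up to the associator the inherited kernels are those of omitting `c₃, …`, plus that of
omitting `c₁ ⊙ c₂`, which factors through omitting `c₁` and so adds nothing; and since `F(0) = 1`
the kernel of `F(−) → F(0)` is everything. A homomorphism is injective iff its kernel is trivial.
-/

open CategoryTheory MonoidalCategory Limits

variable {C : Type*} [Category C] [MonoidalCategory C] [SymmetricCategory C]

/-- The iterated tensor product of a list of objects. -/
noncomputable def listTensor : List C → C
  | [] => 𝟙_ C
  | a :: l => a ⊗ listTensor l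

/-- The projection `c ⊙ d ⟶ c`, using that the monoidal unit is terminal. -/
noncomputable def proj₁ (hT : IsTerminal (𝟙_ C)) (c d : C) : c ⊗ d ⟶ c :=
  (c ◁ hT.from d) ≫ (ρ_ c).hom

/-- The projection `c ⊙ d ⟶ d`, using that the monoidal unit is terminal. -/
noncomputable def proj₂ (hT : IsTerminal (𝟙_ C)) (c d : C) : c ⊗ d ⟶ d :=
  (hT.from c ▷ d) ≫ (λ_ d).hom

/-- The `n`-th cross-effect of a group-valued functor `F`, following Baues–Pirashvili:
`cr₁F(c) = ker (F(c) → F(0))`, and recursively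
`cr_{n+1}F(c₁,c₂,c₃,…) = cr₂(cr_nF(−,c₃,…))(c₁,c₂)`, realized as a subgroup of
`F(c₁ ⊙ ⋯ ⊙ c_n)`. -/
noncomputable def crG (hT : IsTerminal (𝟙_ C)) (F : C ⥤ GrpCat) :
    (l : List C) → Subgroup (F.obj (listTensor l))
  | [] => ⊤
  | [c] => (F.map (hT.from (listTensor [c]))).hom.ker
  | c₁ :: c₂ :: rest =>
    (crG hT F ((c₁ ⊗ c₂) :: rest)).comap (F.map (α_ c₁ c₂ (listTensor rest)).inv).hom
    ⊓ (F.map ((α_ c₁ c₂ (listTensor rest)).inv ≫ (proj₁ hT c₁ c₂ ▷ listTensor rest))).hom.ker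
    ⊓ (F.map ((α_ c₁ c₂ (listTensor rest)).inv ≫ (proj₂ hT c₁ c₂ ▷ listTensor rest))).hom.ker
    ⊓ (F.map (hT.from (listTensor (c₁ :: c₂ :: rest)))).hom.ker
  termination_by l => l.length

/-- `F` is polynomial of degree at most `n` if its `(n+1)`-st cross-effect is trivial. -/
noncomputable def IsPolynomialOfDegLE (hT : IsTerminal (𝟙_ C)) (F : C ⥤ GrpCat) (n : ℕ) : Prop :=
  ∀ l : List C, l.length = n + 1 → crG hT F l = ⊥

/-- The morphism `c₁ ⊙ ⋯ ⊙ c_n ⟶ c₁ ⊙ ⋯ ⊙ ĉ_i ⊙ ⋯ ⊙ c_n` omitting the `i`-th factor,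
induced by the projection `c_i ⟶ 0`. -/
noncomputable def omitMap (hT : IsTerminal (𝟙_ C)) :
    (l : List C) → (i : Fin l.length) → (listTensor l ⟶ listTensor (l.eraseIdx i))
  | a :: l, ⟨0, _⟩ => (hT.from a ▷ listTensor l) ≫ (λ_ (listTensor l)).hom
  | a :: l, ⟨i + 1, h⟩ => a ◁ omitMap hT l ⟨i, by simpa using h⟩

set_option linter.unusedSectionVars false

namespace CategoryTheory.Functor

variable {D : Type*} [Category D] (F : D ⥤ GrpCat)

lemma map_apply_map_eq_of_comp_eq {X Y Y' Z : D} {f : X ⟶ Y} {g : Y ⟶ Z} {f' : X ⟶ Y'}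
    {g' : Y' ⟶ Z} (w : f ≫ g = f' ≫ g') (x : F.obj X) :
    F.map g (F.map f x) = F.map g' (F.map f' x) := by
  simpa only [F.map_comp, GrpCat.comp_apply] using congrArg (fun φ => F.map φ x) w

lemma map_apply_eq_one_iff_of_isIso {Y Z : D} (e : Y ⟶ Z) [IsIso e] (y : F.obj Y) :
    F.map e y = 1 ↔ y = 1 :=
  map_eq_one_iff (F.map e).hom (ConcreteCategory.bijective_of_isIso (F.map e)).1

end CategoryTheory.Functor

section OmitMap

variable (hT : IsTerminal (𝟙_ C))

lemma associator_inv_comp_proj₂_whiskerRight (c₁ c₂ : C) (rest : List C) :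
    (α_ c₁ c₂ (listTensor rest)).inv ≫ proj₂ hT c₁ c₂ ▷ listTensor rest =
      omitMap hT (c₁ :: c₂ :: rest) 0 := by
  change _ = hT.from c₁ ▷ (c₂ ⊗ listTensor rest) ≫ (λ_ (c₂ ⊗ listTensor rest)).hom
  rw [proj₂, comp_whiskerRight, ← associator_inv_naturality_left_assoc]
  monoidal

lemma associator_inv_comp_proj₁_whiskerRight (c₁ c₂ : C) (rest : List C) :
    (α_ c₁ c₂ (listTensor rest)).inv ≫ proj₁ hT c₁ c₂ ▷ listTensor rest =
      omitMap hT (c₁ :: c₂ :: rest) 1 := by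
  change _ = c₁ ◁ (hT.from c₂ ▷ listTensor rest ≫ (λ_ (listTensor rest)).hom)
  rw [proj₁, comp_whiskerRight, MonoidalCategory.whiskerLeft_comp,
    ← associator_inv_naturality_middle_assoc]
  monoidal

lemma associator_inv_comp_omitMap_zero (c₁ c₂ : C) (rest : List C) :
    (α_ c₁ c₂ (listTensor rest)).inv ≫ omitMap hT ((c₁ ⊗ c₂) :: rest) 0 =
      omitMap hT (c₁ :: c₂ :: rest) 0 ≫ omitMap hT (c₂ :: rest) 0 := by
  change (α_ c₁ c₂ (listTensor rest)).inv ≫ hT.from (c₁ ⊗ c₂) ▷ listTensor rest ≫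
      (λ_ (listTensor rest)).hom =
    omitMap hT (c₁ :: c₂ :: rest) 0 ≫ hT.from c₂ ▷ listTensor rest ≫ (λ_ (listTensor rest)).hom
  rw [hT.hom_ext (hT.from (c₁ ⊗ c₂)) (proj₂ hT c₁ c₂ ≫ hT.from c₂), comp_whiskerRight,
    ← associator_inv_comp_proj₂_whiskerRight]
  simp only [Category.assoc]
  exact (Category.assoc (obj := C) _ _ _).symm

lemma associator_inv_comp_omitMap_succ (c₁ c₂ : C) (rest : List C) (k : Fin rest.length) :
    (α_ c₁ c₂ (listTensor rest)).inv ≫ omitMap hT ((c₁ ⊗ c₂) :: rest) k.succ =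
      omitMap hT (c₁ :: c₂ :: rest) k.succ.succ ≫ (α_ c₁ c₂ (listTensor (rest.eraseIdx k))).inv :=
  (associator_inv_naturality_right c₁ c₂ (omitMap hT rest k)).symm

end OmitMap

noncomputable def omitHom (hT : IsTerminal (𝟙_ C)) (F : C ⥤ GrpCat) (l : List C) :
    F.obj (listTensor l) →* ∀ i : Fin l.length, F.obj (listTensor (l.eraseIdx i)) :=
  MonoidHom.pi fun i => (F.map (omitMap hT l i)).hom

lemma mem_ker_omitHom (hT : IsTerminal (𝟙_ C)) (F : C ⥤ GrpCat) {l : List C}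
    (x : F.obj (listTensor l)) :
    x ∈ (omitHom hT F l).ker ↔ ∀ i, F.map (omitMap hT l i) x = 1 := by
  simp [omitHom, funext_iff]

lemma mem_crG_cons_cons_iff (hT : IsTerminal (𝟙_ C)) (F : C ⥤ GrpCat)
    (hF : ∀ x : F.obj (𝟙_ C), x = 1) {c₁ c₂ : C} {rest : List C}
    (h : crG hT F ((c₁ ⊗ c₂) :: rest) = (omitHom hT F ((c₁ ⊗ c₂) :: rest)).ker)
    (x : F.obj (listTensor (c₁ :: c₂ :: rest))) :
    x ∈ crG hT F (c₁ :: c₂ :: rest) ↔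
      (∀ j, F.map (omitMap hT ((c₁ ⊗ c₂) :: rest) j)
          (F.map (α_ c₁ c₂ (listTensor rest)).inv x) = 1) ∧
        F.map (omitMap hT (c₁ :: c₂ :: rest) 1) x = 1 ∧
        F.map (omitMap hT (c₁ :: c₂ :: rest) 0) x = 1 := by
  rw [crG, h, ← associator_inv_comp_proj₁_whiskerRight, ← associator_inv_comp_proj₂_whiskerRight]
  exact ⟨fun ⟨⟨⟨hα, h₁⟩, h₀⟩, _⟩ => ⟨(mem_ker_omitHom hT F _).1 hα, h₁, h₀⟩,
    fun ⟨hα, h₁, h₀⟩ => ⟨⟨⟨(mem_ker_omitHom hT F _).2 hα, h₁⟩, h₀⟩, hF _⟩⟩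

theorem crG_eq_ker_omitHom (hT : IsTerminal (𝟙_ C)) (F : C ⥤ GrpCat)
    (hF : ∀ x : F.obj (𝟙_ C), x = 1) : ∀ l : List C, crG hT F l = (omitHom hT F l).ker
  | [] => by
    ext x
    rw [crG, mem_ker_omitHom]
    exact iff_of_true trivial fun i => i.elim0
  | [c] => by
    ext x
    rw [crG, mem_ker_omitHom, MonoidHom.mem_ker]
    exact iff_of_true (hF _) (Fin.forall_fin_one.mpr (hF _))
  | c₁ :: c₂ :: rest => by
    ext x
    rw [mem_crG_cons_cons_iff hT F hF (crG_eq_ker_omitHom hT F hF _), mem_ker_omitHom]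
    -- `listTensor (c :: l)` is `c ⊗ listTensor l` only after unfolding, so `rw` cannot match
    -- across the associator; the identities are transported by `exact` instead.
    have omit_succ (k : Fin rest.length) := F.map_apply_map_eq_of_comp_eq
      (associator_inv_comp_omitMap_succ hT c₁ c₂ rest k) x
    have iso_eq_one_iff (k : Fin rest.length) :=
      F.map_apply_eq_one_iff_of_isIso (α_ c₁ c₂ (listTensor (rest.eraseIdx k))).inv
    constructor
    · rintro ⟨h, h₁, h₀⟩ i
      refine Fin.cases h₀ (Fin.cases h₁ fun k => ?_) i
      exact (iso_eq_one_iff k _).1 ((omit_succ k).symm.trans (h k.succ))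
    · intro h
      refine ⟨Fin.cases ?_ fun k => ?_, h 1, h 0⟩
      · refine (F.map_apply_map_eq_of_comp_eq
          (associator_inv_comp_omitMap_zero hT c₁ c₂ rest) x).trans ?_
        exact (congrArg (F.map (omitMap hT (c₂ :: rest) 0)) (h 0)).trans (map_one _)
      · exact (omit_succ k).trans ((iso_eq_one_iff k _).2 (h k.succ.succ))

/-- A constant-free group-valued functor `F` is polynomial of degree ≤ n if and only if,
for all objects `c₁,…,c_{n+1}`, the natural map
`F(c₁ ⊙ ⋯ ⊙ c_{n+1}) → ∏ᵢ F(c₁ ⊙ ⋯ ⊙ ĉ_i ⊙ ⋯ ⊙ c_{n+1})` is injective. -/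
theorem isPolynomialOfDegLE_iff_injective (hT : IsTerminal (𝟙_ C)) (F : C ⥤ GrpCat)
    (hF : ∀ x : F.obj (𝟙_ C), x = 1) (n : ℕ) :
    IsPolynomialOfDegLE hT F n ↔
      ∀ l : List C, l.length = n + 1 →
        Function.Injective
          (fun (x : F.obj (listTensor l)) (i : Fin l.length) => F.map (omitMap hT l i) x) := by
  simp only [IsPolynomialOfDegLE, crG_eq_ker_omitHom hT F hF, MonoidHom.ker_eq_bot_iff]
  rfl
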